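/- Let G be a bipartite graph with bipartition (W, B), |W| = |B|, and let F be a minimal (with respect to inclusion) set of edges such that G − F has no perfect matching but G − F + e has a perfect matching for every e ∈ F. If G is k-regular and |F| = k, then F is an edge cut of G. -/

import Mathlib

/-! Hall's theorem gives `S ⊆ W` whose neighbourhood `N` in `G − F` has fewer than `#S` vertices.
Every edge at `S` lies in `F` or at `N`, so `k * #S ≤ #F + k * #N ≤ k + k * (#S - 1)`. Equality
throughout forces `F` to consist of edges at `S` none of which touches `N`, and every edge at `N`
to end in `S`; hence `F` is exactly the set of edges leaving `S ∪ N`. -/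

open SimpleGraph

variable {V : Type*}

/-- `G` has a perfect matching. -/
def HasPerfectMatching (G : SimpleGraph V) : Prop :=
  ∃ M : G.Subgraph, M.IsPerfectMatching

/-- `F` is a matching preclusion set of `G`. -/
def IsMPSet (G : SimpleGraph V) (F : Finset (Sym2 V)) : Prop :=
  ↑F ⊆ G.edgeSet ∧ ¬ HasPerfectMatching (G.deleteEdges ↑F)

/-- The matching preclusion number of `G`. -/
noncomputable def mpNumber (G : SimpleGraph V) : ℕ :=
  sInf {n | ∃ F : Finset (Sym2 V), IsMPSet G F ∧ F.card = n}

/-- `G` is `k`-regular. -/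
def GIsRegular (G : SimpleGraph V) (k : ℕ) : Prop :=
  ∀ v : V, (G.neighborSet v).ncard = k

/-- `G` is vertex-transitive. -/
def VertexTransitive (G : SimpleGraph V) : Prop :=
  ∀ x y : V, ∃ φ : G ≃g G, φ x = y

/-- The minimum degree of `G`. -/
noncomputable def minDeg (G : SimpleGraph V) : ℕ :=
  sInf {d | ∃ v : V, (G.neighborSet v).ncard = d}

/-- `F` is an edge cut of `G`: the set of all edges between `X` and its complement,
for some `X` with both `X` and `Xᶜ` nonempty. -/
def IsEdgeCut (G : SimpleGraph V) (F : Set (Sym2 V)) : Prop :=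
  ∃ X : Set V, X.Nonempty ∧ Xᶜ.Nonempty ∧
    F = {e | ∃ a ∈ X, ∃ b ∈ Xᶜ, G.Adj a b ∧ e = s(a, b)}


open Finset

theorem Finset.eq_union_and_disjoint_of_subset_union_of_card_add_le {α : Type*}
    [DecidableEq α] {A B C : Finset α} (h : A ⊆ B ∪ C) (hc : #B + #C ≤ #A) :
    A = B ∪ C ∧ Disjoint B C := by
  have hBC := card_union_le B C
  have hA := card_le_card h
  exact ⟨eq_of_subset_of_card_le h (by omega), card_union_eq_card_add_card.mp (by omega)⟩

theorem GIsRegular.isRegularOfDegree {G : SimpleGraph V} [G.LocallyFinite] {k : ℕ}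
    (h : GIsRegular G k) : G.IsRegularOfDegree k :=
  fun v => (Set.ncard_eq_toFinset_card' _).symm.trans (h v)

theorem Set.compl_union_nonempty_of_ncard_lt [Finite V] {W S N : Set V}
    (hW : W.ncard = Wᶜ.ncard) (hS : S ⊆ W) (h : N.ncard < S.ncard) :
    (S ∪ N)ᶜ.Nonempty := by
  obtain ⟨b, hb, hbN⟩ := Set.exists_mem_notMem_of_ncard_lt_ncard
    (h.trans_le ((Set.ncard_le_ncard hS).trans hW.le))
  exact ⟨b, fun hbSN => hbSN.elim (fun hbS => hb (hS hbS)) hbN⟩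

namespace SimpleGraph

def edgeCut (G : SimpleGraph V) (X : Set V) : Set (Sym2 V) :=
  {e | ∃ a ∈ X, ∃ b ∈ Xᶜ, G.Adj a b ∧ e = s(a, b)}

theorem mk_mem_edgeCut {G : SimpleGraph V} {X : Set V} {a b : V} :
    s(a, b) ∈ G.edgeCut X ↔ G.Adj a b ∧ (a ∈ X ∧ b ∉ X ∨ b ∈ X ∧ a ∉ X) := by
  constructor
  · rintro ⟨x, hx, y, hy, hxy, he⟩
    rcases Sym2.eq_iff.mp he with ⟨rfl, rfl⟩ | ⟨rfl, rfl⟩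
    exacts [⟨hxy, .inl ⟨hx, hy⟩⟩, ⟨hxy.symm, .inr ⟨hx, hy⟩⟩]
  · rintro ⟨hab, ⟨ha, hb⟩ | ⟨hb, ha⟩⟩
    exacts [⟨a, ha, b, hb, hab, rfl⟩, ⟨b, hb, a, ha, hab.symm, Sym2.eq_swap⟩]

theorem IsBipartiteWith.isIndepSet_of_subset_left {G : SimpleGraph V} {s t u : Set V}
    (h : G.IsBipartiteWith s t) (hu : u ⊆ s) : G.IsIndepSet u :=
  fun _ ha _ hb _ hab => h.disjoint.notMem_of_mem_left (hu hb) (h.mem_of_mem_adj (hu ha) hab)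

theorem IsBipartiteWith.mono {G H : SimpleGraph V} {s t : Set V} (h : G.IsBipartiteWith s t)
    (hHG : H ≤ G) : H.IsBipartiteWith s t :=
  ⟨h.disjoint, fun _ _ hadj => h.mem_of_adj (hHG hadj)⟩

theorem Subgraph.IsMatching.isPerfectMatching_of_ncard_eq [Finite V] {G : SimpleGraph V}
    {M : G.Subgraph} {W : Set V} (hG : G.IsBipartiteWith W Wᶜ) (hM : M.IsMatching)
    (hWM : W ⊆ M.verts) (hW : W.ncard = Wᶜ.ncard) : M.IsPerfectMatching := by
  refine ⟨hM, Subgraph.isSpanning_iff.mpr (Set.eq_univ_of_forall fun v => ?_)⟩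
  by_cases hv : v ∈ W
  · exact hWM hv
  let partner : ∀ a ∈ W, V := fun a ha => (hM (hWM ha)).choose
  have partner_adj : ∀ a ha, M.Adj a (partner a ha) := fun a ha => (hM (hWM ha)).choose_spec.1
  obtain ⟨a, ha, rfl⟩ := Set.surj_on_of_inj_on_of_ncard_le partner
    (fun a ha => hG.mem_of_mem_adj ha (M.adj_sub (partner_adj a ha)))
    (fun a₁ a₂ ha₁ ha₂ h => hM.eq_of_adj_right (partner_adj a₁ ha₁) (h ▸ partner_adj a₂ ha₂))
    hW.ge (Set.toFinite _) v hv
  exact M.edge_vert (partner_adj a ha).symm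

theorem exists_card_biUnion_neighborFinset_lt_of_not_hasPerfectMatching [Fintype V]
    [DecidableEq V] {G : SimpleGraph V} [DecidableRel G.Adj] {W : Set V}
    (hG : G.IsBipartiteWith W Wᶜ) (hW : W.ncard = Wᶜ.ncard) (h : ¬ HasPerfectMatching G) :
    ∃ S : Finset V, ↑S ⊆ W ∧ #(S.biUnion (G.neighborFinset ·)) < #S := by
  by_contra! hHall
  obtain ⟨M, hWM, hM⟩ := exists_isMatching_of_forall_ncard_le hG fun s hs => by
    lift s to Finset V using s.toFinite
    have := hHall s hs
    rw [← Set.ncard_coe_finset, ← Set.ncard_coe_finset, Finset.coe_biUnion] at this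
    simpa only [coe_neighborFinset] using this
  exact h ⟨M, hM.isPerfectMatching_of_ncard_eq hG hWM hW⟩

section Counting

variable [Fintype V] [DecidableEq V] {G : SimpleGraph V} [DecidableRel G.Adj] {k : ℕ}
  {F : Finset (Sym2 V)} {S : Finset V}

theorem mk_mem_biUnion_incidenceFinset {a b : V} :
    s(a, b) ∈ S.biUnion (G.incidenceFinset ·) ↔ G.Adj a b ∧ (a ∈ S ∨ b ∈ S) := by
  simp only [mem_biUnion, mem_incidenceFinset, incidenceSet, Set.mem_ofPred_eq, mem_edgeSet,
    Sym2.mem_iff]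
  grind

theorem IsIndepSet.card_biUnion_incidenceFinset (hS : G.IsIndepSet ↑S) :
    #(S.biUnion (G.incidenceFinset ·)) = ∑ v ∈ S, G.degree v := by
  rw [card_biUnion fun a ha b hb hab => ?_]
  · simp only [card_incidenceFinset_eq_degree]
  · rw [Function.onFun, ← disjoint_coe, coe_incidenceFinset, coe_incidenceFinset,
      Set.disjoint_iff_inter_eq_empty]
    exact G.incidenceSet_inter_incidenceSet_of_not_adj (hS ha hb hab) hab

theorem biUnion_incidenceFinset_subset_union (F : Finset (Sym2 V)) (S : Finset V) :
    S.biUnion (G.incidenceFinset ·) ⊆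
      F ∪ (S.biUnion ((G.deleteEdges ↑F).neighborFinset ·)).biUnion (G.incidenceFinset ·) := by
  have mem_N {a b : V} (ha : a ∈ S) (hab : G.Adj a b) (hF : s(a, b) ∉ F) :
      b ∈ S.biUnion ((G.deleteEdges ↑F).neighborFinset ·) :=
    mem_biUnion.mpr ⟨a, ha, by simpa using And.intro hab hF⟩
  intro e he
  induction e using Sym2.ind with | h a b => ?_
  rw [mem_union, mk_mem_biUnion_incidenceFinset]
  by_cases h : s(a, b) ∈ F
  · exact .inl h
  obtain ⟨hab, ha | hb⟩ := mk_mem_biUnion_incidenceFinset.mp he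
  · exact .inr ⟨hab, .inr (mem_N ha hab h)⟩
  · exact .inr ⟨hab, .inl (mem_N hb hab.symm (Sym2.eq_swap ▸ h))⟩

theorem IsIndepSet.disjoint_biUnion_neighborFinset (hS : G.IsIndepSet ↑S) :
    Disjoint S (S.biUnion (G.neighborFinset ·)) := by
  refine Finset.disjoint_left.mpr fun b hbS hbN => ?_
  obtain ⟨a, haS, hab⟩ := mem_biUnion.mp hbN
  rw [mem_neighborFinset] at hab
  exact hS haS hbS hab.ne hab

/-- The edges at `S` number `k * #S ≥ k + k * #N`, which bounds `#F` plus the number of edges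
at `N`, so the covering of `biUnion_incidenceFinset_subset_union` has no slack. -/
theorem biUnion_incidenceFinset_eq_union_and_disjoint (hG : G.IsRegularOfDegree k) (hF : #F ≤ k)
    (hS : G.IsIndepSet ↑S) (hdef : #(S.biUnion ((G.deleteEdges ↑F).neighborFinset ·)) < #S) :
    S.biUnion (G.incidenceFinset ·) =
        F ∪ (S.biUnion ((G.deleteEdges ↑F).neighborFinset ·)).biUnion (G.incidenceFinset ·) ∧
      Disjoint F ((S.biUnion ((G.deleteEdges ↑F).neighborFinset ·)).biUnion
        (G.incidenceFinset ·)) := by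
  set N := S.biUnion ((G.deleteEdges ↑F).neighborFinset ·)
  refine eq_union_and_disjoint_of_subset_union_of_card_add_le
    (biUnion_incidenceFinset_subset_union F S) ?_
  calc #F + #(N.biUnion (G.incidenceFinset ·))
      ≤ k + #N * k := add_le_add hF (card_biUnion_le_card_mul _ _ _ fun v _ => by simp [hG v])
    _ ≤ #S * k := by nlinarith
    _ = #(S.biUnion (G.incidenceFinset ·)) := by
      simp [hS.card_biUnion_incidenceFinset, hG.degree_eq]

theorem coe_eq_edgeCut_of_card_biUnion_neighborFinset_lt (hG : G.IsRegularOfDegree k)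
    (hF : #F ≤ k) (hS : G.IsIndepSet ↑S)
    (hdef : #(S.biUnion ((G.deleteEdges ↑F).neighborFinset ·)) < #S) :
    (↑F : Set (Sym2 V)) =
      G.edgeCut (↑S ∪ ↑(S.biUnion ((G.deleteEdges ↑F).neighborFinset ·))) := by
  obtain ⟨hEq, hdisj⟩ := biUnion_incidenceFinset_eq_union_and_disjoint hG hF hS hdef
  set N := S.biUnion ((G.deleteEdges ↑F).neighborFinset ·)
  have hSN : Disjoint S N := IsIndepSet.disjoint_biUnion_neighborFinset
    fun a ha b hb hne hab => hS ha hb hne (G.deleteEdges_le _ hab)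
  have mem_F {a b : V} (hab : G.Adj a b) (ha : a ∈ S ∨ a ∈ N) (hb : ¬(b ∈ S ∨ b ∈ N)) :
      s(a, b) ∈ F := by
    obtain ⟨hbS, hbN⟩ := not_or.mp hb
    have he : s(a, b) ∈ S.biUnion (G.incidenceFinset ·) := by
      rcases ha with ha | ha
      · exact mk_mem_biUnion_incidenceFinset.mpr ⟨hab, .inl ha⟩
      · exact hEq ▸ mem_union_right _ (mk_mem_biUnion_incidenceFinset.mpr ⟨hab, .inl ha⟩)
    have haS := (mk_mem_biUnion_incidenceFinset.mp he).2.resolve_right hbS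
    rw [hEq, mem_union] at he
    refine he.resolve_right fun heN => ?_
    have haN := (mk_mem_biUnion_incidenceFinset.mp heN).2.resolve_right hbN
    exact Finset.disjoint_left.mp hSN haS haN
  ext e
  induction e using Sym2.ind with | h a b => ?_
  simp only [mem_coe, mk_mem_edgeCut, Set.mem_union]
  constructor
  · intro he
    obtain ⟨hab, haS⟩ := mk_mem_biUnion_incidenceFinset.mp
      (hEq ▸ mem_union_left _ he : s(a, b) ∈ S.biUnion (G.incidenceFinset ·))
    have hN : ¬(a ∈ N ∨ b ∈ N) := fun h =>
      Finset.disjoint_left.mp hdisj he (mk_mem_biUnion_incidenceFinset.mpr ⟨hab, h⟩)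
    have hSS : ¬(a ∈ S ∧ b ∈ S) := fun h => hS h.1 h.2 hab.ne hab
    exact ⟨hab, by tauto⟩
  · rintro ⟨hab, ⟨ha, hb⟩ | ⟨hb, ha⟩⟩
    · exact mem_F hab ha hb
    · exact Sym2.eq_swap ▸ mem_F hab.symm hb ha

end Counting

end SimpleGraph

theorem stmt8_general [Fintype V] (G : SimpleGraph V) (k : ℕ) (W : Set V)
    (hbip : ∀ a b : V, G.Adj a b → ((a ∈ W ∧ b ∉ W) ∨ (a ∉ W ∧ b ∈ W)))
    (hWB : W.ncard = Wᶜ.ncard)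
    (hreg : GIsRegular G k)
    (F : Finset (Sym2 V))
    (hnopm : ¬ HasPerfectMatching (G.deleteEdges ↑F))
    (hFk : F.card = k) :
    IsEdgeCut G ↑F := by
  classical
  have hG : G.IsBipartiteWith W Wᶜ := ⟨disjoint_compl_right, hbip⟩
  obtain ⟨S, hSW, hdef⟩ := exists_card_biUnion_neighborFinset_lt_of_not_hasPerfectMatching
    (hG.mono (G.deleteEdges_le ↑F)) hWB hnopm
  refine ⟨_, ?_, Set.compl_union_nonempty_of_ncard_lt hWB hSW ?_,
    coe_eq_edgeCut_of_card_biUnion_neighborFinset_lt hreg.isRegularOfDegree hFk.le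
      (hG.isIndepSet_of_subset_left hSW) hdef⟩
  · exact (coe_nonempty.mpr (card_pos.mp (by omega))).mono Set.subset_union_left
  · simpa only [Set.ncard_coe_finset] using hdef

theorem stmt8 [Fintype V] [DecidableEq V] (G : SimpleGraph V) (k : ℕ) (W : Set V)
    (hbip : ∀ a b : V, G.Adj a b → ((a ∈ W ∧ b ∉ W) ∨ (a ∉ W ∧ b ∈ W)))
    (hWB : W.ncard = Wᶜ.ncard)
    (hreg : GIsRegular G k)
    (F : Finset (Sym2 V)) (hFE : ↑F ⊆ G.edgeSet)
    (hnopm : ¬ HasPerfectMatching (G.deleteEdges ↑F))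
    (hminimal : ∀ e ∈ F, HasPerfectMatching (G.deleteEdges ↑(F.erase e)))
    (hFk : F.card = k) :
    IsEdgeCut G ↑F :=
  stmt8_general G k W hbip hWB hreg F hnopm hFk
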